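/- arXiv:1704.07193 — 8 statements merged into one kernel-verified Lean document; each statement's English description precedes it below -/
import Mathlib

section
/- Let a, b be nonzero complex numbers with 0 < |a| ≤ |b|, and let c = (|a|/|b|)·b. Let χ be the concatenation of the shorter circular arc on the circle of radius |a| centered at 0 from a to c, followed by the radial segment [c, b]. Then the Euclidean length of χ satisfies |a - b| ≤ ℓ(χ) ≤ 3|a - b|. Moreover, if |b| ≤ e|a|, then ℓ(χ) ≤ 2e|a|. -/
open Real

/-!
Write `r = ‖x‖ ≤ R = ‖y‖`, `θ` for the angle between `x` and `y`, and `S = sin (θ / 2)`.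
The law of cosines in the form `‖x - y‖² = (R - r)² + 4 r R S²` compares the chord `‖x - y‖`
with `2 r S` from both sides: `2 r S ≤ ‖x - y‖ ≤ 2 r S + (R - r)`. Since `θ / π ≤ S ≤ θ / 2`
(Jordan's inequality and `sin t ≤ t`), the arc `r θ` lies between `2 r S` and `(π / 2) · 2 r S`,
and the radial segment `R - r` is at most `‖x - y‖` by the triangle inequality.
-/

open InnerProductGeometry

section ArcRadialPath

variable {V : Type*} [NormedAddCommGroup V] [InnerProductSpace ℝ V]

/-- Length of the path from `x` along a shortest circular arc of radius `‖x‖` to the ray through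
`y`, followed by the radial segment to `y`. -/
noncomputable def arcRadialPathLength (x y : V) : ℝ :=
  ‖x‖ * angle x y + (‖y‖ - ‖x‖)

theorem norm_sub_sq_eq_sq_add_four_mul_sin_sq (x y : V) :
    ‖x - y‖ ^ 2 = (‖y‖ - ‖x‖) ^ 2 + 4 * ‖x‖ * ‖y‖ * sin (angle x y / 2) ^ 2 := by
  have hcos : cos (angle x y) = 1 - 2 * sin (angle x y / 2) ^ 2 := by
    have h := cos_two_mul (angle x y / 2)
    rw [mul_div_cancel₀ _ two_ne_zero] at h
    linear_combination h + 2 * cos_sq_add_sin_sq (angle x y / 2)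
  rw [sq ‖x - y‖, norm_sub_sq_eq_norm_sq_add_norm_sq_sub_two_mul_norm_mul_norm_mul_cos_angle, hcos]
  ring

theorem sin_angle_div_two_nonneg (x y : V) : 0 ≤ sin (angle x y / 2) :=
  sin_nonneg_of_nonneg_of_le_pi (by linarith [angle_nonneg x y])
    (by linarith [angle_le_pi x y, pi_pos])

theorem norm_sub_le_two_mul_sin_add (x y : V) (h : ‖x‖ ≤ ‖y‖) :
    ‖x - y‖ ≤ 2 * ‖x‖ * sin (angle x y / 2) + (‖y‖ - ‖x‖) := by
  have hS := sin_angle_div_two_nonneg x y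
  have hS1 := sin_le_one (angle x y / 2)
  refine le_of_pow_le_pow_left₀ two_ne_zero (by positivity [sub_nonneg.2 h]) ?_
  rw [norm_sub_sq_eq_sq_add_four_mul_sin_sq]
  -- the difference of the two sides is `4 r (R - r) S (1 - S)`
  have : 0 ≤ ‖x‖ * (‖y‖ - ‖x‖) * sin (angle x y / 2) * (1 - sin (angle x y / 2)) := by
    have := sub_nonneg.2 h
    have := sub_nonneg.2 hS1
    positivity
  nlinarith

theorem two_mul_sin_le_norm_sub (x y : V) (h : ‖x‖ ≤ ‖y‖) :
    2 * ‖x‖ * sin (angle x y / 2) ≤ ‖x - y‖ := by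
  have hS := sin_angle_div_two_nonneg x y
  refine le_of_pow_le_pow_left₀ two_ne_zero (norm_nonneg _) ?_
  rw [norm_sub_sq_eq_sq_add_four_mul_sin_sq]
  have : 0 ≤ ‖x‖ * (‖y‖ - ‖x‖) * sin (angle x y / 2) ^ 2 := by
    have := sub_nonneg.2 h
    positivity
  nlinarith [sq_nonneg (‖y‖ - ‖x‖)]

theorem norm_sub_le_arcRadialPathLength (x y : V) (h : ‖x‖ ≤ ‖y‖) :
    ‖x - y‖ ≤ arcRadialPathLength x y := by
  have hsin : sin (angle x y / 2) ≤ angle x y / 2 := sin_le (by linarith [angle_nonneg x y])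
  calc ‖x - y‖ ≤ 2 * ‖x‖ * sin (angle x y / 2) + (‖y‖ - ‖x‖) := norm_sub_le_two_mul_sin_add x y h
    _ ≤ 2 * ‖x‖ * (angle x y / 2) + (‖y‖ - ‖x‖) := by gcongr
    _ = arcRadialPathLength x y := by rw [arcRadialPathLength]; ring

theorem mul_angle_le_pi_div_two_mul_norm_sub (x y : V) (h : ‖x‖ ≤ ‖y‖) :
    ‖x‖ * angle x y ≤ π / 2 * ‖x - y‖ := by
  have hjordan : 2 / π * (angle x y / 2) ≤ sin (angle x y / 2) :=
    mul_le_sin (by linarith [angle_nonneg x y]) (by linarith [angle_le_pi x y])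
  calc ‖x‖ * angle x y = π / 2 * (2 * ‖x‖ * (2 / π * (angle x y / 2))) := by
        field_simp
    _ ≤ π / 2 * (2 * ‖x‖ * sin (angle x y / 2)) := by gcongr
    _ ≤ π / 2 * ‖x - y‖ := by gcongr; exact two_mul_sin_le_norm_sub x y h

theorem arcRadialPathLength_le_three_mul_norm_sub (x y : V) (h : ‖x‖ ≤ ‖y‖) :
    arcRadialPathLength x y ≤ 3 * ‖x - y‖ := by
  have hradial : ‖y‖ - ‖x‖ ≤ ‖x - y‖ := norm_sub_rev y x ▸ norm_sub_norm_le y x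
  have harc := mul_angle_le_pi_div_two_mul_norm_sub x y h
  have : π / 2 * ‖x - y‖ ≤ 2 * ‖x - y‖ := by gcongr; linarith [pi_le_four]
  rw [arcRadialPathLength]
  linarith

theorem arcRadialPathLength_le_two_mul_exp_one_mul (x y : V) (h : ‖y‖ ≤ exp 1 * ‖x‖) :
    arcRadialPathLength x y ≤ 2 * exp 1 * ‖x‖ := by
  have harc : ‖x‖ * angle x y ≤ ‖x‖ * π := by gcongr; exact angle_le_pi x y
  have : ‖x‖ * π ≤ ‖x‖ * (exp 1 + 1) := by
    gcongr; linarith [pi_lt_d2, exp_one_gt_d9]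
  rw [arcRadialPathLength]
  linarith

end ArcRadialPath

/-- The length of the circular-arc-segment path `χ_{ab}` from `a` along the shorter arc
of the circle of radius `|a|` to `c = (|a|/|b|)·b`, followed by the radial segment `[c,b]`:
the arc has length `|a|·θ` with `θ = |Arg (b/a)|`, and the segment has length `|b| - |a|`. -/
theorem length_circular_arc_segment_path (a b : ℂ)
    (ha : 0 < ‖a‖) (hab : ‖a‖ ≤ ‖b‖) :
    ‖a - b‖ ≤
        ‖a‖ * |Complex.arg (b / a)| + (‖b‖ - ‖a‖) ∧
    ‖a‖ * |Complex.arg (b / a)| + (‖b‖ - ‖a‖) ≤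
        3 * ‖a - b‖ ∧
    (‖b‖ ≤ Real.exp 1 * ‖a‖ →
      ‖a‖ * |Complex.arg (b / a)| + (‖b‖ - ‖a‖) ≤
        2 * Real.exp 1 * ‖a‖) := by
  have ha0 : a ≠ 0 := norm_pos_iff.1 ha
  have hb0 : b ≠ 0 := norm_pos_iff.1 (ha.trans_le hab)
  have hlength : ‖a‖ * |Complex.arg (b / a)| + (‖b‖ - ‖a‖) = arcRadialPathLength a b := by
    rw [arcRadialPathLength, angle_comm, Complex.angle_eq_abs_arg hb0 ha0]
  rw [hlength]
  exact ⟨norm_sub_le_arcRadialPathLength a b hab,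
    arcRadialPathLength_le_three_mul_norm_sub a b hab,
    arcRadialPathLength_le_two_mul_exp_one_mul a b⟩
end

section
/- Let a, b be nonzero complex numbers with |a| ≤ |b|, and let γ(t) = exp(t·Log(b/a))·a for t ∈ [0,1] be the quasihyperbolic geodesic (logarithmic spiral) in ℂ \ {0} from a to b. Then the Euclidean length of γ satisfies |a - b| ≤ ℓ(γ) ≤ 5|a - b|. -/
/-!
Put `z = Log (b / a) = s + iθ`, so `s = log (|b|/|a|) ≥ 0` and `|θ| ≤ π`. Then
`|a - b| = |a| |e^z - 1|` and `ℓ(γ) = |a| |z| q` with `q = (e^s - 1)/s` (`q = 1` when `s = 0`).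
Squaring, `|e^z - 1|² = (e^s - 1)² + 2 e^s (1 - cos θ)` and `|z|² q² = (e^s - 1)² + θ² q²`,
so it suffices to compare `θ² q²` with `2 e^s (1 - cos θ)`. This follows from
`2 (1 - cos θ) ≤ θ² ≤ 5 (1 - cos θ)` on `[-π, π]` together with `e^s ≤ q²`,
and `q² ≤ 3 e^s` for `s ≤ 1`; for `s ≥ 1` the term `θ² q²` is absorbed by
`s² q² = (e^s - 1)²` since `θ² < 10`.
-/

open Real

lemma exp_le_sq_exp_sub_one_div {s : ℝ} (hs : 0 < s) : exp s ≤ ((exp s - 1) / s) ^ 2 := by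
  have hsinh : s / 2 ≤ sinh (s / 2) := self_le_sinh_iff.2 (by linarith)
  have hexp : exp s = exp (s / 2) ^ 2 := by rw [← exp_nat_mul]; ring_nf
  have hfactor : exp s - 1 = 2 * exp (s / 2) * sinh (s / 2) := by
    have h : exp (s / 2) * exp (-(s / 2)) = 1 := by rw [← exp_add, add_neg_cancel, exp_zero]
    rw [sinh_eq, hexp]
    linear_combination h
  have hle : s * exp (s / 2) ≤ exp s - 1 := by
    rw [hfactor]; nlinarith [exp_pos (s / 2)]
  rw [div_pow, le_div_iff₀ (by positivity)]
  calc exp s * s ^ 2 = (s * exp (s / 2)) ^ 2 := by rw [hexp]; ring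
    _ ≤ (exp s - 1) ^ 2 := pow_le_pow_left₀ (by positivity) hle 2

lemma sq_exp_sub_one_div_le_three_mul_exp {s : ℝ} (hs₀ : 0 < s) (hs₁ : s ≤ 1) :
    ((exp s - 1) / s) ^ 2 ≤ 3 * exp s := by
  have hle : exp s - 1 ≤ s * exp s := by
    have h : exp (-s) * exp s = 1 := by rw [← exp_add, neg_add_cancel, exp_zero]
    nlinarith [one_sub_le_exp_neg s, exp_pos s]
  have hexp : exp s ≤ 3 := (exp_le_exp.2 hs₁).trans (exp_one_lt_d9.le.trans (by norm_num))
  rw [div_pow, div_le_iff₀ (by positivity)]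
  calc (exp s - 1) ^ 2 ≤ (s * exp s) ^ 2 :=
        pow_le_pow_left₀ (sub_nonneg.2 (one_le_exp hs₀.le)) hle 2
    _ = exp s * exp s * s ^ 2 := by ring
    _ ≤ 3 * exp s * s ^ 2 := by gcongr

lemma sq_le_five_mul_one_sub_cos {θ : ℝ} (hθ : |θ| ≤ π) : θ ^ 2 ≤ 5 * (1 - cos θ) := by
  have hcos := cos_le_one_sub_mul_cos_sq hθ
  have hπ : 1 ≤ 5 * (2 / π ^ 2) := by
    rw [← mul_div_assoc, le_div_iff₀ (by positivity)]
    nlinarith [pi_lt_d2, pi_pos]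
  nlinarith [le_mul_of_one_le_left (sq_nonneg θ) hπ]

namespace Complex

lemma sq_norm_exp_sub_one (z : ℂ) :
    ‖exp z - 1‖ ^ 2 = (Real.exp z.re - 1) ^ 2 + 2 * Real.exp z.re * (1 - Real.cos z.im) := by
  rw [Complex.sq_norm, normSq_apply, sub_re, sub_im, exp_re, exp_im, one_re, one_im]
  linear_combination Real.exp z.re ^ 2 * Real.sin_sq_add_cos_sq z.im

lemma sq_norm_eq_re_sq_add_im_sq (z : ℂ) : ‖z‖ ^ 2 = z.re ^ 2 + z.im ^ 2 := by
  rw [Complex.sq_norm, normSq_apply]; ring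

lemma norm_exp_sub_one_le_norm_mul {z : ℂ} (hz : 0 < z.re) :
    ‖exp z - 1‖ ≤ ‖z‖ * ((Real.exp z.re - 1) / z.re) := by
  set q := (Real.exp z.re - 1) / z.re
  have hq : q * z.re = Real.exp z.re - 1 := div_mul_cancel₀ _ hz.ne'
  have hq₀ : 0 ≤ q := div_nonneg (sub_nonneg.2 (Real.one_le_exp hz.le)) hz.le
  have hexp := exp_le_sq_exp_sub_one_div hz
  have hcos : 1 - Real.cos z.im ≤ z.im ^ 2 / 2 := by
    linarith [Real.one_sub_sq_div_two_le_cos (x := z.im)]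
  rw [← sq_le_sq₀ (norm_nonneg _) (by positivity), mul_pow, sq_norm_exp_sub_one,
    sq_norm_eq_re_sq_add_im_sq, ← hq]
  nlinarith [sq_nonneg z.im, Real.exp_pos z.re]

lemma norm_mul_le_five_mul_norm_exp_sub_one {z : ℂ} (hz : 0 < z.re) (hπ : |z.im| ≤ π) :
    ‖z‖ * ((Real.exp z.re - 1) / z.re) ≤ 5 * ‖exp z - 1‖ := by
  set q := (Real.exp z.re - 1) / z.re
  have hq : q * z.re = Real.exp z.re - 1 := div_mul_cancel₀ _ hz.ne'
  have hq₀ : 0 ≤ q := div_nonneg (sub_nonneg.2 (Real.one_le_exp hz.le)) hz.le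
  have hcos := sq_le_five_mul_one_sub_cos hπ
  -- `25 = 1 + 24`: the spare `24 s² q²` absorbs `θ² q²` once `s ≥ 1`
  have him : z.im ^ 2 * q ^ 2 ≤ 24 * (q * z.re) ^ 2 + 3 * Real.exp z.re * z.im ^ 2 := by
    rcases le_or_gt 1 z.re with hbig | hsmall
    · have : z.im ^ 2 ≤ 24 * z.re ^ 2 := by nlinarith [pi_lt_d2, abs_le.1 hπ]
      nlinarith [sq_nonneg q, Real.exp_pos z.re, sq_nonneg z.im]
    · nlinarith [sq_nonneg z.im, sq_nonneg (q * z.re),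
        sq_exp_sub_one_div_le_three_mul_exp hz hsmall.le]
  rw [← sq_le_sq₀ (by positivity) (by positivity), mul_pow, mul_pow, sq_norm_exp_sub_one,
    sq_norm_eq_re_sq_add_im_sq, ← hq]
  nlinarith [mul_le_mul_of_nonneg_left hcos (Real.exp_pos z.re).le,
    mul_nonneg (Real.exp_pos z.re).le (sub_nonneg.2 (Real.cos_le_one z.im))]

lemma norm_exp_sub_one_le_abs_im {z : ℂ} (hz : z.re = 0) : ‖exp z - 1‖ ≤ |z.im| := by
  rw [← sq_le_sq₀ (norm_nonneg _) (abs_nonneg _), sq_norm_exp_sub_one, hz, sq_abs]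
  simp only [Real.exp_zero, sub_self]
  linarith [Real.one_sub_sq_div_two_le_cos (x := z.im)]

lemma abs_im_le_five_mul_norm_exp_sub_one {z : ℂ} (hz : z.re = 0) (hπ : |z.im| ≤ π) :
    |z.im| ≤ 5 * ‖exp z - 1‖ := by
  rw [← sq_le_sq₀ (abs_nonneg _) (by positivity), mul_pow, sq_norm_exp_sub_one, hz, sq_abs]
  simp only [Real.exp_zero, sub_self]
  linarith [sq_le_five_mul_one_sub_cos hπ, Real.cos_le_one z.im]

end Complex

theorem length_log_spiral_general (a b : ℂ) (ha : a ≠ 0)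
    (hab : ‖a‖ ≤ ‖b‖) (L : ℝ)
    (hL1 : ‖a‖ < ‖b‖ →
      L = ‖Complex.log (b / a)‖ * (‖b‖ - ‖a‖) /
            Real.log (‖b‖ / ‖a‖))
    (hL2 : ‖a‖ = ‖b‖ →
      L = ‖a‖ * |Complex.arg (b / a)|) :
    ‖a - b‖ ≤ L ∧ L ≤ 5 * ‖a - b‖ := by
  have ha₀ : 0 < ‖a‖ := norm_pos_iff.2 ha
  have hb : b ≠ 0 := norm_pos_iff.1 (ha₀.trans_le hab)
  set z := Complex.log (b / a)
  have hz_exp : Complex.exp z = b / a := Complex.exp_log (div_ne_zero hb ha)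
  have hz_re : z.re = Real.log (‖b‖ / ‖a‖) := by rw [Complex.log_re, norm_div]
  have hexp_re : Real.exp z.re = ‖b‖ / ‖a‖ := by
    rw [hz_re, Real.exp_log (div_pos (ha₀.trans_le hab) ha₀)]
  have hπ : |z.im| ≤ π := abs_le.2 ⟨(Complex.neg_pi_lt_log_im _).le, Complex.log_im_le_pi _⟩
  have hdist : ‖a - b‖ = ‖a‖ * ‖Complex.exp z - 1‖ := by
    rw [hz_exp, ← norm_mul, mul_sub, mul_div_cancel₀ _ ha, mul_one, norm_sub_rev]
  rw [hdist, mul_left_comm]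
  rcases hab.lt_or_eq with hlt | heq
  · have hz : 0 < z.re := by
      rw [← Real.exp_lt_exp, Real.exp_zero, hexp_re]; exact (one_lt_div ha₀).2 hlt
    have hL : L = ‖a‖ * (‖z‖ * ((Real.exp z.re - 1) / z.re)) := by
      rw [hL1 hlt, hexp_re, ← hz_re]; field_simp
    rw [hL]
    exact ⟨mul_le_mul_of_nonneg_left (Complex.norm_exp_sub_one_le_norm_mul hz) ha₀.le,
      mul_le_mul_of_nonneg_left (Complex.norm_mul_le_five_mul_norm_exp_sub_one hz hπ) ha₀.le⟩
  · have hz : z.re = 0 := by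
      rw [← Real.exp_eq_one_iff, hexp_re, heq, div_self (ha₀.trans_eq heq).ne']
    rw [hL2 heq, ← Complex.log_im]
    exact ⟨mul_le_mul_of_nonneg_left (Complex.norm_exp_sub_one_le_abs_im hz) ha₀.le,
      mul_le_mul_of_nonneg_left (Complex.abs_im_le_five_mul_norm_exp_sub_one hz hπ) ha₀.le⟩

/-- The Euclidean length of the quasihyperbolic geodesic (logarithmic spiral)
`γ(t) = exp(t·Log(b/a))·a` in `ℂ \ {0}` from `a` to `b`, which equals
`|Log(b/a)|·(|b|-|a|)/log(|b|/|a|)` when `|b| > |a|` and `|a|·|Arg(b/a)|`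
when `|b| = |a|`, is comparable to `|a - b|`:  `|a-b| ≤ ℓ(γ) ≤ 5|a-b|`. -/
theorem length_log_spiral (a b : ℂ) (ha : a ≠ 0) (hb : b ≠ 0)
    (hab : ‖a‖ ≤ ‖b‖) (L : ℝ)
    (hL1 : ‖a‖ < ‖b‖ →
      L = ‖Complex.log (b / a)‖ * (‖b‖ - ‖a‖) /
            Real.log (‖b‖ / ‖a‖))
    (hL2 : ‖a‖ = ‖b‖ →
      L = ‖a‖ * |Complex.arg (b / a)|) :
    ‖a - b‖ ≤ L ∧ L ≤ 5 * ‖a - b‖ :=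
  length_log_spiral_general a b ha hab L hL1 hL2
end

section
/- Let a, b be nonzero complex numbers and k₀ the quasihyperbolic distance in ℂ \ {0} (so k₀(a,b) = |Log(b/a)|). Then |a - b|/max(|a|,|b|) ≤ k₀(a,b) ≤ (1 + π/2)·|a - b|/min(|a|,|b|). -/
/-!
Put `z = b / a`; by homogeneity both bounds compare `z` with `1`.

Lower bound: `z - 1 = exp w - exp 0` for `w = log z`. On the half-plane `re u ≤ max 0 (re w)`,
which contains `0` and `w`, `‖exp u‖ = exp (re u) ≤ max 1 ‖z‖`, so the mean value inequality
gives `‖z - 1‖ ≤ max 1 ‖z‖ * ‖w‖`.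

Upper bound: `‖log z‖ ≤ |log ‖z‖| + |arg z|`. The radial term is handled by `|log t| ≤ t - 1`
for `t ≥ 1`, applied to `‖z‖` or `‖z‖⁻¹`. For the angular term `θ = arg z`,
`‖z - 1‖² = (‖z‖ - 1)² + 2‖z‖(1 - cos θ)` and `1 - cos θ ≥ 2θ²/π²` on `[-π, π]` give
`√‖z‖ |θ| ≤ (π/2) ‖z - 1‖`, while `min 1 ‖z‖ ≤ √‖z‖`.
-/

open Real

theorem Real.min_one_mul_abs_log_le {r : ℝ} (hr : 0 < r) : min 1 r * |log r| ≤ |r - 1| := by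
  rcases le_total 1 r with h | h
  · rw [min_eq_left h, one_mul, abs_of_nonneg (log_nonneg h), abs_of_nonneg (sub_nonneg.2 h)]
    exact log_le_sub_one_of_pos hr
  · rw [min_eq_right h, abs_of_nonpos (log_nonpos hr.le h), abs_of_nonpos (sub_nonpos.2 h)]
    have hlog := one_sub_inv_le_log_of_pos hr
    calc r * -log r ≤ r * (r⁻¹ - 1) := by gcongr; linarith
      _ = -(r - 1) := by field_simp; ring

namespace Complex

theorem norm_exp_sub_one_le_max_mul (w : ℂ) : ‖exp w - 1‖ ≤ max 1 ‖exp w‖ * ‖w‖ := by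
  have hbound : ∀ u ∈ {u : ℂ | u.re ≤ max 0 w.re}, ‖deriv exp u‖ ≤ max 1 ‖exp w‖ := by
    intro u hu
    rw [deriv_exp, norm_exp, norm_exp, ← Real.exp_zero, ← Real.exp_monotone.map_max]
    exact Real.exp_le_exp.mpr hu
  simpa using (convex_halfSpace_re_le (max 0 w.re)).norm_image_sub_le_of_norm_deriv_le
    (fun u _ => differentiableAt_exp) hbound (x := 0) (y := w) (by simp) (by simp)

theorem norm_sub_one_le_max_mul_norm_log {z : ℂ} (hz : z ≠ 0) :
    ‖z - 1‖ ≤ max 1 ‖z‖ * ‖log z‖ := by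
  simpa only [exp_log hz] using norm_exp_sub_one_le_max_mul (log z)

theorem norm_sub_one_sq (z : ℂ) :
    ‖z - 1‖ ^ 2 = (‖z‖ - 1) ^ 2 + 2 * ‖z‖ * (1 - Real.cos (arg z)) := by
  have hre := norm_mul_cos_arg z
  have hnorm : ‖z‖ ^ 2 = z.re * z.re + z.im * z.im := by
    rw [Complex.sq_norm, normSq_apply]
  rw [Complex.sq_norm, normSq_apply]
  simp only [sub_re, one_re, sub_im, one_im]
  linear_combination 2 * hre - hnorm

theorem norm_mul_arg_sq_le (z : ℂ) : ‖z‖ * arg z ^ 2 ≤ (π / 2) ^ 2 * ‖z - 1‖ ^ 2 := by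
  have hcos := Real.cos_le_one_sub_mul_cos_sq (abs_arg_le_pi z)
  calc ‖z‖ * arg z ^ 2 = (π / 2) ^ 2 * (2 * ‖z‖ * (2 / π ^ 2 * arg z ^ 2)) := by
        field_simp
    _ ≤ (π / 2) ^ 2 * (2 * ‖z‖ * (1 - Real.cos (arg z))) := by gcongr; linarith
    _ ≤ (π / 2) ^ 2 * ‖z - 1‖ ^ 2 := by
        rw [norm_sub_one_sq]; gcongr; exact le_add_of_nonneg_left (sq_nonneg _)

theorem min_one_mul_abs_arg_le (z : ℂ) : min 1 ‖z‖ * |arg z| ≤ π / 2 * ‖z - 1‖ := by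
  have hmin : min 1 ‖z‖ ^ 2 ≤ ‖z‖ := by
    rcases le_total 1 ‖z‖ with h | h
    · rw [min_eq_left h]; linarith
    · rw [min_eq_right h, sq]; exact mul_le_of_le_one_left (norm_nonneg z) h
  refine (pow_le_pow_iff_left₀ (by positivity) (by positivity) two_ne_zero).1 ?_
  calc (min 1 ‖z‖ * |arg z|) ^ 2 = min 1 ‖z‖ ^ 2 * arg z ^ 2 := by
        rw [mul_pow, sq_abs]
    _ ≤ ‖z‖ * arg z ^ 2 := by gcongr
    _ ≤ (π / 2 * ‖z - 1‖) ^ 2 := by rw [mul_pow]; exact norm_mul_arg_sq_le z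

theorem min_one_mul_norm_log_le {z : ℂ} (hz : z ≠ 0) :
    min 1 ‖z‖ * ‖log z‖ ≤ (1 + π / 2) * ‖z - 1‖ := by
  have hradial : |‖z‖ - 1| ≤ ‖z - 1‖ := by simpa using abs_norm_sub_norm_le z 1
  calc min 1 ‖z‖ * ‖log z‖ ≤ min 1 ‖z‖ * (|Real.log ‖z‖| + |arg z|) := by
        gcongr
        simpa only [log_re, log_im] using norm_le_abs_re_add_abs_im (log z)
    _ = min 1 ‖z‖ * |Real.log ‖z‖| + min 1 ‖z‖ * |arg z| := mul_add _ _ _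
    _ ≤ ‖z - 1‖ + π / 2 * ‖z - 1‖ :=
        add_le_add ((Real.min_one_mul_abs_log_le (norm_pos_iff.2 hz)).trans hradial)
          (min_one_mul_abs_arg_le z)
    _ = (1 + π / 2) * ‖z - 1‖ := by ring

theorem norm_sub_eq_norm_mul_norm_div_sub_one {a : ℂ} (ha : a ≠ 0) (b : ℂ) :
    ‖a - b‖ = ‖a‖ * ‖b / a - 1‖ := by
  rw [← norm_mul, mul_sub_one, mul_div_cancel₀ b ha, norm_sub_rev]

end Complex

/-- For the quasihyperbolic distance `k₀(a,b) = |Log(b/a)|` in the punctured plane `ℂ \ {0}`: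
`|a-b|/max(|a|,|b|) ≤ k₀(a,b) ≤ (1 + π/2)·|a-b|/min(|a|,|b|)`. -/
theorem qh_punctured_plane_euclidean_bounds (a b : ℂ) (ha : a ≠ 0) (hb : b ≠ 0) :
    ‖a - b‖ / max ‖a‖ ‖b‖ ≤
        ‖Complex.log (b / a)‖ ∧
    ‖Complex.log (b / a)‖ ≤
        (1 + Real.pi / 2) *
          (‖a - b‖ / min ‖a‖ ‖b‖) := by
  have hz : b / a ≠ 0 := div_ne_zero hb ha
  have hna : 0 < ‖a‖ := norm_pos_iff.2 ha
  have hnb : ‖b‖ = ‖a‖ * ‖b / a‖ := by rw [norm_div, mul_div_cancel₀ _ hna.ne']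
  have hmax : max ‖a‖ ‖b‖ = ‖a‖ * max 1 ‖b / a‖ := by
    rw [mul_max_of_nonneg _ _ hna.le, mul_one, hnb]
  have hmin : min ‖a‖ ‖b‖ = ‖a‖ * min 1 ‖b / a‖ := by
    rw [mul_min_of_nonneg _ _ hna.le, mul_one, hnb]
  rw [Complex.norm_sub_eq_norm_mul_norm_div_sub_one ha, hmax, hmin,
    mul_div_mul_left _ _ hna.ne', mul_div_mul_left _ _ hna.ne']
  constructor
  · rw [div_le_iff₀ (lt_max_of_lt_left one_pos), mul_comm]
    exact Complex.norm_sub_one_le_max_mul_norm_log hz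
  · rw [← mul_div_assoc, le_div_iff₀ (lt_min one_pos (norm_pos_iff.2 hz)), mul_comm]
    exact Complex.min_one_mul_norm_log_le hz
end

section
/- Let Ω ⊂ ℂ be a domain, and suppose the annulus A = {z : d·e^{-m} < |z - o| < d·e^m} with center o ∈ ℂ \ Ω, d > 0, and m > log 4 is contained in Ω. Then for every z with d·e^{-(m - log 2)} < |z - o| < d·e^{m - log 2}: every nearest boundary point ζ ∈ ∂Ω with |z - ζ| = dist(z, ∂Ω) satisfies |ζ - o| ≤ d·e^{-m}, and moreover (1/2)|z - o| ≤ dist(z, ∂Ω) ≤ |z - o|. -/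
/-!
With `ρ = d·e^{-m}` and `R = d·e^m`, the core condition on `z` reads `2ρ < |z - o| < R/2`.
Since `Ω` is open, its frontier avoids the annulus. The segment from `z ∈ Ω` to `o ∉ Ω` crosses
the frontier, so `dist(z, ∂Ω) ≤ |z - o|`. A nearest boundary point `ζ` thus has
`|ζ - o| ≤ 2|z - o| < R`, so it lies in the inner disk; the lower bound is the triangle
inequality against the inner disk and against the exterior of the annulus.
-/

open Set Metric

theorem IsPreconnected.inter_frontier_nonempty {X : Type*} [TopologicalSpace X] {s t : Set X}
    (hs : IsPreconnected s) (hst : (s ∩ t).Nonempty) (hs_t : (s \ t).Nonempty) :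
    (s ∩ frontier t).Nonempty := by
  by_contra h
  have hcover : s ⊆ interior t ∪ (closure t)ᶜ := fun x hx ↦ by
    by_cases hxt : x ∈ interior t
    · exact .inl hxt
    · exact .inr fun hcl ↦ h ⟨x, hx, hcl, hxt⟩
  obtain ⟨x, hxs, hxt⟩ := hst
  obtain ⟨y, hys, hyt⟩ := hs_t
  have hx_int : x ∈ interior t :=
    (hcover hxs).resolve_right (not_not_intro (subset_closure hxt))
  have hy_cl : y ∈ (closure t)ᶜ := (hcover hys).resolve_left fun hy ↦ hyt (interior_subset hy)
  obtain ⟨_, _, hu, hv⟩ :=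
    hs _ _ isOpen_interior isClosed_closure.isOpen_compl hcover ⟨x, hxs, hx_int⟩ ⟨y, hys, hy_cl⟩
  exact hv (interior_subset_closure hu)

theorem exists_mem_frontier_dist_le {E : Type*} [NormedAddCommGroup E] [NormedSpace ℝ E]
    {s : Set E} {x y : E} (hx : x ∈ s) (hy : y ∉ s) :
    ∃ w ∈ frontier s, dist x w ≤ dist x y := by
  obtain ⟨w, hw_seg, hw⟩ := (convex_segment x y).isPreconnected.inter_frontier_nonempty
    ⟨x, left_mem_segment ℝ x y, hx⟩ ⟨y, right_mem_segment ℝ x y, hy⟩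
  exact ⟨w, hw, by linarith [dist_add_dist_of_mem_segment hw_seg, dist_nonneg (x := w) (y := y)]⟩

section Annulus

variable {X : Type*} [PseudoMetricSpace X] {o z ζ : X} {ρ R : ℝ}

theorem dist_le_or_le_dist_of_mem_frontier {Ω : Set X} (hΩ : IsOpen Ω)
    (hA : ∀ ζ, ρ < dist ζ o → dist ζ o < R → ζ ∈ Ω) (hζ : ζ ∈ frontier Ω) :
    dist ζ o ≤ ρ ∨ R ≤ dist ζ o := by
  by_contra! h
  exact (disjoint_frontier_iff_isOpen.2 hΩ).notMem_of_mem_left hζ (hA ζ h.1 h.2)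

theorem half_dist_le_dist_of_outside_annulus (hρ : 2 * ρ < dist z o) (hR : 2 * dist z o < R)
    (hζ : dist ζ o ≤ ρ ∨ R ≤ dist ζ o) : dist z o / 2 ≤ dist z ζ := by
  rcases hζ with h | h
  · linarith [dist_triangle z ζ o]
  · linarith [dist_triangle_left ζ o z, dist_nonneg (x := z) (y := o)]

theorem dist_le_of_outside_annulus_of_dist_le (hR : 2 * dist z o < R)
    (hζ : dist ζ o ≤ ρ ∨ R ≤ dist ζ o) (hclose : dist z ζ ≤ dist z o) : dist ζ o ≤ ρ :=
  hζ.resolve_right fun h ↦ by linarith [dist_triangle_left ζ o z]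

end Annulus

theorem nearest_boundary_point_deep_in_annulus_general
    (Ω : Set ℂ) (hΩo : IsOpen Ω)
    (o : ℂ) (d m : ℝ) (ho : o ∉ Ω)
    (hA : ∀ z : ℂ, d * Real.exp (-m) < ‖z - o‖ →
      ‖z - o‖ < d * Real.exp m → z ∈ Ω)
    (z : ℂ)
    (hz1 : d * Real.exp (-(m - Real.log 2)) < ‖z - o‖)
    (hz2 : ‖z - o‖ < d * Real.exp (m - Real.log 2)) :
    (∀ ζ ∈ frontier Ω, ‖z - ζ‖ = Metric.infDist z (frontier Ω) →
        ‖ζ - o‖ ≤ d * Real.exp (-m)) ∧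
    (1 / 2) * ‖z - o‖ ≤ Metric.infDist z (frontier Ω) ∧
    Metric.infDist z (frontier Ω) ≤ ‖z - o‖ := by
  simp only [← dist_eq_norm] at *
  rw [neg_sub, Real.exp_sub, Real.exp_log two_pos, div_eq_mul_inv, ← Real.exp_neg] at hz1
  rw [Real.exp_sub, Real.exp_log two_pos] at hz2
  have hρ : 2 * (d * Real.exp (-m)) < dist z o := by linarith
  have hR : 2 * dist z o < d * Real.exp m := by linarith
  have hzo := dist_nonneg (x := z) (y := o)
  have hzΩ : z ∈ Ω := hA z (by linarith) (by linarith)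
  have hfr := fun ζ (hζ : ζ ∈ frontier Ω) ↦ dist_le_or_le_dist_of_mem_frontier hΩo hA hζ
  obtain ⟨w, hw, hzw⟩ := exists_mem_frontier_dist_le hzΩ ho
  have hub : infDist z (frontier Ω) ≤ dist z o := (infDist_le_dist_of_mem hw).trans hzw
  refine ⟨fun ζ hζ hnear ↦ ?_, (le_infDist ⟨w, hw⟩).2 fun ζ hζ ↦ ?_, hub⟩
  · exact dist_le_of_outside_annulus_of_dist_le hR (hfr ζ hζ) (hnear.trans_le hub)
  · linarith [half_dist_le_dist_of_outside_annulus hρ hR (hfr ζ hζ)]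

/-- If the annulus `{z : d·e^{-m} < |z-o| < d·e^m}` with center `o ∉ Ω` and `m > log 4`
lies in the domain `Ω`, then for any `z` in the `(log 2)`-core, every nearest boundary
point `ζ` of `z` satisfies `|ζ - o| ≤ d·e^{-m}`, and `(1/2)|z-o| ≤ dist(z,∂Ω) ≤ |z-o|`. -/
theorem nearest_boundary_point_deep_in_annulus
    (Ω : Set ℂ) (hΩo : IsOpen Ω) (hΩc : IsConnected Ω)
    (o : ℂ) (d m : ℝ) (hd : 0 < d) (hm : Real.log 4 < m) (ho : o ∉ Ω)
    (hA : ∀ z : ℂ, d * Real.exp (-m) < ‖z - o‖ →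
      ‖z - o‖ < d * Real.exp m → z ∈ Ω)
    (z : ℂ)
    (hz1 : d * Real.exp (-(m - Real.log 2)) < ‖z - o‖)
    (hz2 : ‖z - o‖ < d * Real.exp (m - Real.log 2)) :
    (∀ ζ ∈ frontier Ω, ‖z - ζ‖ = Metric.infDist z (frontier Ω) →
        ‖ζ - o‖ ≤ d * Real.exp (-m)) ∧
    (1 / 2) * ‖z - o‖ ≤ Metric.infDist z (frontier Ω) ∧
    Metric.infDist z (frontier Ω) ≤ ‖z - o‖ :=
  nearest_boundary_point_deep_in_annulus_general Ω hΩo o d m ho hA z hz1 hz2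
end

section
/- Let q ≥ log 2, and let A = {z : d·e^{-r} < |z - o₁| < d·e^r} and B = {z : c·e^{-s} < |z - o₂| < c·e^s} be two annuli contained in a domain Ω ⊂ ℂ, with centers o₁, o₂ ∈ ℂ \ Ω and r, s > q. Suppose the q-cores {z : d·e^{-(r-q)} < |z - o₁| < d·e^{r-q}} and {z : c·e^{-(s-q)} < |z - o₂| < c·e^{s-q}} intersect. Then |o₁ - o₂| ≤ min(d·e^{-r}, c·e^{-s}). -/
/-!
A center lies outside `Ω`, so it is not in the other annulus: its distance `D` to the other
center is either at most the inner radius or at least the outer radius of that annulus. Since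
`e^q ≥ 2`, a point `z` in both cores is more than twice the inner radius and less than half the
outer radius away from each center. Two far centers would give `D ≤ |z - o₁| + |z - o₂| <` the
larger outer radius; `D` below the first inner radius and above the second outer radius would
give `D < |z - o₂| < D / 2`, since `|z - o₁| > 2D`. So `D` is below both inner radii.
-/

open Real

section Metric

variable {α : Type*} [PseudoMetricSpace α]

theorem dist_le_or_le_dist_of_notMem_of_annulus_subset {Ω : Set α} {x y : α} {ρ R : ℝ}
    (hA : ∀ z, ρ < dist z y → dist z y < R → z ∈ Ω) (hx : x ∉ Ω) :
    dist x y ≤ ρ ∨ R ≤ dist x y := by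
  by_contra! h
  exact hx (hA x h.1 h.2)

theorem dist_lt_dist_of_two_mul_dist_lt {x y z : α} (h : 2 * dist x y < dist z x) :
    dist x y < dist z y := by
  linarith [dist_triangle z y x, dist_comm x y]

theorem dist_lt_max_of_two_mul_dist_lt {x y z : α} {R₁ R₂ : ℝ}
    (h₁ : 2 * dist z x < R₁) (h₂ : 2 * dist z y < R₂) : dist x y < max R₁ R₂ := by
  linarith [dist_triangle_left x y z, le_max_left R₁ R₂, le_max_right R₁ R₂]

theorem dist_le_min_of_mem_cores {x y z : α} {ρ₁ R₁ ρ₂ R₂ : ℝ}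
    (hy : dist y x ≤ ρ₁ ∨ R₁ ≤ dist y x) (hx : dist x y ≤ ρ₂ ∨ R₂ ≤ dist x y)
    (hρ₁ : 2 * ρ₁ < dist z x) (hR₁ : 2 * dist z x < R₁)
    (hρ₂ : 2 * ρ₂ < dist z y) (hR₂ : 2 * dist z y < R₂) :
    dist x y ≤ min ρ₁ ρ₂ := by
  rw [dist_comm y x] at hy
  rcases hy with hnear₁ | hfar₁ <;> rcases hx with hnear₂ | hfar₂
  · exact le_min hnear₁ hnear₂
  · have := dist_lt_dist_of_two_mul_dist_lt (show 2 * dist x y < dist z x by linarith)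
    linarith [dist_nonneg (x := z) (y := y)]
  · have := dist_lt_dist_of_two_mul_dist_lt (show 2 * dist y x < dist z y by
      linarith [dist_comm x y])
    linarith [dist_nonneg (x := z) (y := x), dist_comm x y]
  · have := dist_lt_max_of_two_mul_dist_lt hR₁ hR₂
    linarith [max_le hfar₁ hfar₂]

end Metric

theorem two_mul_lt_of_mem_core {d r q a : ℝ} (hd : 0 < d) (hq : log 2 ≤ q)
    (h₁ : d * exp (-(r - q)) < a) (h₂ : a < d * exp (r - q)) :
    2 * (d * exp (-r)) < a ∧ 2 * a < d * exp r := by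
  have h2q : 2 ≤ exp q := by
    simpa only [exp_log two_pos] using exp_le_exp.mpr hq
  have hinner : d * exp (-(r - q)) = d * exp (-r) * exp q := by
    rw [mul_assoc, ← exp_add]; ring_nf
  have houter : d * exp r = d * exp (r - q) * exp q := by
    rw [mul_assoc, ← exp_add]; ring_nf
  have hρ : 0 < d * exp (-r) := by positivity
  have hR : 0 < d * exp (r - q) := by positivity
  constructor <;> nlinarith

theorem centers_close_of_cores_intersect_general
    (Ω : Set ℂ)
    (o₁ o₂ : ℂ) (d c r s q : ℝ) (hd : 0 < d) (hc : 0 < c)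
    (hq : Real.log 2 ≤ q)
    (ho₁ : o₁ ∉ Ω) (ho₂ : o₂ ∉ Ω)
    (hA : ∀ z : ℂ, d * Real.exp (-r) < ‖z - o₁‖ →
      ‖z - o₁‖ < d * Real.exp r → z ∈ Ω)
    (hB : ∀ z : ℂ, c * Real.exp (-s) < ‖z - o₂‖ →
      ‖z - o₂‖ < c * Real.exp s → z ∈ Ω)
    (hmeet : ∃ z : ℂ,
      (d * Real.exp (-(r - q)) < ‖z - o₁‖ ∧
        ‖z - o₁‖ < d * Real.exp (r - q)) ∧
      (c * Real.exp (-(s - q)) < ‖z - o₂‖ ∧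
        ‖z - o₂‖ < c * Real.exp (s - q))) :
    ‖o₁ - o₂‖ ≤ min (d * Real.exp (-r)) (c * Real.exp (-s)) := by
  simp only [← dist_eq_norm] at hA hB hmeet ⊢
  obtain ⟨z, ⟨hz₁, hz₁'⟩, hz₂, hz₂'⟩ := hmeet
  obtain ⟨hρ₁, hR₁⟩ := two_mul_lt_of_mem_core hd hq hz₁ hz₁'
  obtain ⟨hρ₂, hR₂⟩ := two_mul_lt_of_mem_core hc hq hz₂ hz₂'
  exact dist_le_min_of_mem_cores (dist_le_or_le_dist_of_notMem_of_annulus_subset hA ho₂)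
    (dist_le_or_le_dist_of_notMem_of_annulus_subset hB ho₁) hρ₁ hR₁ hρ₂ hR₂

/-- If two annuli in a domain `Ω` with centers in `ℂ \ Ω` have intersecting `q`-cores
(`q ≥ log 2`), then their centers are close: `|o₁ - o₂| ≤ min(d·e^{-r}, c·e^{-s})`. -/
theorem centers_close_of_cores_intersect
    (Ω : Set ℂ) (hΩo : IsOpen Ω) (hΩc : IsConnected Ω)
    (o₁ o₂ : ℂ) (d c r s q : ℝ) (hd : 0 < d) (hc : 0 < c)
    (hq : Real.log 2 ≤ q) (hr : q < r) (hs : q < s)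
    (ho₁ : o₁ ∉ Ω) (ho₂ : o₂ ∉ Ω)
    (hA : ∀ z : ℂ, d * Real.exp (-r) < ‖z - o₁‖ →
      ‖z - o₁‖ < d * Real.exp r → z ∈ Ω)
    (hB : ∀ z : ℂ, c * Real.exp (-s) < ‖z - o₂‖ →
      ‖z - o₂‖ < c * Real.exp s → z ∈ Ω)
    (hmeet : ∃ z : ℂ,
      (d * Real.exp (-(r - q)) < ‖z - o₁‖ ∧
        ‖z - o₁‖ < d * Real.exp (r - q)) ∧
      (c * Real.exp (-(s - q)) < ‖z - o₂‖ ∧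
        ‖z - o₂‖ < c * Real.exp (s - q))) :
    ‖o₁ - o₂‖ ≤ min (d * Real.exp (-r)) (c * Real.exp (-s)) :=
  centers_close_of_cores_intersect_general Ω o₁ o₂ d c r s q hd hc hq ho₁ ho₂ hA hB hmeet
end

section
/- Let q ≥ log 2 and let A = {z : d·e^{-r} < |z - o₁| < d·e^r}, B = {z : c·e^{-s} < |z - o₂| < c·e^s} be annuli contained in a domain Ω with o₁, o₂ ∈ ∂Ω, r, s > q, and suppose additionally that both boundary circles of A and both boundary circles of B contain points of ∂Ω. If the q-cores of A and B intersect, then d/2 ≤ c ≤ 2d and |r - s| ≤ log 4. -/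
/-!
The complement of `Ω` misses both annuli, and it contains both centers and a point on each of the
four boundary circles. A point of the intersection of the cores lies in the `2`-cores
`2ρ < |z - o| < R/2` of both annuli. Triangle inequalities through that point force each center
into the inner disk of the other annulus, so the centers are within `min ρ₁ ρ₂` of each other;
then a boundary point of `Ω` on a circle of one annulus, which avoids the other annulus, shows that
corresponding radii agree up to a factor `2`. In the coordinates `log d ∓ r` of the radii these
four comparisons are linear, and averaging them gives the bounds on `log d - log c` and `r - s`.
-/

open Real

def annulus {X : Type*} [PseudoMetricSpace X] (o : X) (ρ R : ℝ) : Set X :=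
  {z | ρ < dist z o ∧ dist z o < R}

section Annulus

variable {X : Type*} [PseudoMetricSpace X] {K : Set X} {o o' z ξ : X} {ρ R ρ' R' : ℝ}

theorem notMem_annulus_iff : z ∉ annulus o ρ R ↔ dist z o ≤ ρ ∨ R ≤ dist z o := by
  simp only [annulus, Set.mem_ofPred_eq, not_and_or, not_lt]

theorem dist_le_inner_of_mem_annulus_two (hz : z ∈ annulus o (2 * ρ) (R / 2))
    (hz' : z ∈ annulus o' (2 * ρ') (R' / 2)) (ho' : o' ∉ annulus o ρ R)
    (ho : o ∉ annulus o' ρ' R') : dist o o' ≤ ρ := by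
  have h₁ := dist_triangle z o o'
  have h₂ := dist_triangle_left o o' z
  rw [dist_comm o o']
  rcases notMem_annulus_iff.1 ho' with hρ | hR
  · exact hρ
  rcases notMem_annulus_iff.1 ho with hρ' | hR' <;>
    linarith [hz.2, hz'.1, hz'.2, dist_nonneg (x := o) (y := o'), dist_comm o o']

theorem two_mul_inner_lt_outer (hz : 2 * ρ < dist z o) (hz' : dist z o' < R' / 2)
    (ho : dist o o' ≤ ρ) : 2 * ρ < R' := by
  linarith [dist_triangle z o' o, dist_comm o o']

theorem le_two_mul_inner_or_outer_le_two_mul (hξ : ξ ∉ annulus o' ρ' R')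
    (hρ' : dist o o' ≤ ρ') (hξo : dist o o' ≤ dist ξ o) :
    dist ξ o ≤ 2 * ρ' ∨ R' ≤ 2 * dist ξ o := by
  rcases notMem_annulus_iff.1 hξ with h | h
  · left; linarith [dist_triangle ξ o' o, dist_comm o o']
  · right; linarith [dist_triangle ξ o o']

theorem inner_le_two_mul_and_outer_le_two_mul (hK : Disjoint K (annulus o ρ R))
    (hK' : Disjoint K (annulus o' ρ' R')) (ho : o ∈ K) (ho' : o' ∈ K)
    (hz : z ∈ annulus o (2 * ρ) (R / 2)) (hz' : z ∈ annulus o' (2 * ρ') (R' / 2))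
    (hin : ∃ ξ ∈ K, dist ξ o = ρ) (hout : ∃ ξ ∈ K, dist ξ o = R) :
    ρ ≤ 2 * ρ' ∧ R' ≤ 2 * R := by
  have ho'A := hK.notMem_of_mem_left ho'
  have hoB := hK'.notMem_of_mem_left ho
  have hD : dist o o' ≤ ρ := dist_le_inner_of_mem_annulus_two hz hz' ho'A hoB
  have hD' : dist o o' ≤ ρ' :=
    dist_comm o o' ▸ dist_le_inner_of_mem_annulus_two hz' hz hoB ho'A
  have hρR' : 2 * ρ < R' := two_mul_inner_lt_outer hz.1 hz'.2 hD
  have hρ'R : 2 * ρ' < R := two_mul_inner_lt_outer hz'.1 hz.2 (dist_comm o o' ▸ hD')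
  obtain ⟨ξ, hξK, hξ⟩ := hin
  obtain ⟨η, hηK, hη⟩ := hout
  constructor
  · rcases le_two_mul_inner_or_outer_le_two_mul (hK'.notMem_of_mem_left hξK) hD' (hξ ▸ hD)
      with h | h <;> linarith
  · have hρR : ρ ≤ R := by linarith [hz.1, hz.2, dist_nonneg (x := o) (y := o')]
    rcases le_two_mul_inner_or_outer_le_two_mul (hK'.notMem_of_mem_left hηK) hD'
      (by linarith) with h | h <;> linarith

theorem mem_annulus_two_of_mem_core {d r q : ℝ} (hd : 0 ≤ d) (hq : log 2 ≤ q)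
    (h : d * exp (-(r - q)) < dist z o ∧ dist z o < d * exp (r - q)) :
    z ∈ annulus o (2 * (d * exp (-r))) (d * exp r / 2) := by
  have h2q : 2 ≤ exp q := by rw [← exp_log two_pos]; exact exp_le_exp.2 hq
  constructor
  · calc 2 * (d * exp (-r)) ≤ exp q * (d * exp (-r)) := by gcongr
      _ = d * exp (-(r - q)) := by rw [neg_sub, sub_eq_add_neg, exp_add]; ring
      _ < dist z o := h.1
  · calc dist z o < d * exp (r - q) := h.2
      _ = d * exp r / exp q := by rw [exp_sub]; ring
      _ ≤ d * exp r / 2 := by gcongr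

end Annulus

theorem log_add_le_of_mul_exp_le_two_mul {d c r s : ℝ} (hd : 0 < d) (hc : 0 < c)
    (h : d * exp r ≤ 2 * (c * exp s)) : log d + r ≤ log 2 + (log c + s) := by
  have := log_le_log (by positivity) h
  rwa [log_mul hd.ne' (exp_ne_zero r), log_mul two_ne_zero (by positivity),
    log_mul hc.ne' (exp_ne_zero s), log_exp, log_exp] at this

theorem comparable_of_radii_le_two_mul {d c r s : ℝ} (hd : 0 < d) (hc : 0 < c)
    (hin : d * exp (-r) ≤ 2 * (c * exp (-s))) (hin' : c * exp (-s) ≤ 2 * (d * exp (-r)))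
    (hout : d * exp r ≤ 2 * (c * exp s)) (hout' : c * exp s ≤ 2 * (d * exp r)) :
    d / 2 ≤ c ∧ c ≤ 2 * d ∧ |r - s| ≤ log 4 := by
  have h₁ := log_add_le_of_mul_exp_le_two_mul hd hc hin
  have h₂ := log_add_le_of_mul_exp_le_two_mul hc hd hin'
  have h₃ := log_add_le_of_mul_exp_le_two_mul hd hc hout
  have h₄ := log_add_le_of_mul_exp_le_two_mul hc hd hout'
  have hlog4 : log 4 = 2 * log 2 := by
    rw [show (4 : ℝ) = 2 ^ 2 by norm_num, log_pow]; norm_num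
  have hlog2 : 0 < log 2 := log_pos one_lt_two
  have hdc : d ≤ 2 * c := by
    rw [← log_le_log_iff hd (by positivity), log_mul two_ne_zero hc.ne']; linarith
  have hcd : c ≤ 2 * d := by
    rw [← log_le_log_iff hc (by positivity), log_mul two_ne_zero hd.ne']; linarith
  exact ⟨by linarith, hcd, abs_sub_le_iff.2 ⟨by linarith, by linarith⟩⟩

theorem comparable_annuli_of_cores_intersect_general
    (Ω : Set ℂ) (hΩo : IsOpen Ω)
    (o₁ o₂ : ℂ) (d c r s q : ℝ) (hd : 0 < d) (hc : 0 < c)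
    (hq : Real.log 2 ≤ q)
    (ho₁ : o₁ ∈ frontier Ω) (ho₂ : o₂ ∈ frontier Ω)
    (hA : ∀ z : ℂ, d * Real.exp (-r) < ‖z - o₁‖ →
      ‖z - o₁‖ < d * Real.exp r → z ∈ Ω)
    (hB : ∀ z : ℂ, c * Real.exp (-s) < ‖z - o₂‖ →
      ‖z - o₂‖ < c * Real.exp s → z ∈ Ω)
    (hA_in : ∃ ξ ∈ frontier Ω, ‖ξ - o₁‖ = d * Real.exp (-r))
    (hA_out : ∃ ξ ∈ frontier Ω, ‖ξ - o₁‖ = d * Real.exp r)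
    (hB_in : ∃ ξ ∈ frontier Ω, ‖ξ - o₂‖ = c * Real.exp (-s))
    (hB_out : ∃ ξ ∈ frontier Ω, ‖ξ - o₂‖ = c * Real.exp s)
    (hmeet : ∃ z : ℂ,
      (d * Real.exp (-(r - q)) < ‖z - o₁‖ ∧
        ‖z - o₁‖ < d * Real.exp (r - q)) ∧
      (c * Real.exp (-(s - q)) < ‖z - o₂‖ ∧
        ‖z - o₂‖ < c * Real.exp (s - q))) :
    d / 2 ≤ c ∧ c ≤ 2 * d ∧ |r - s| ≤ Real.log 4 := by
  simp only [← dist_eq_norm] at hA hB hA_in hA_out hB_in hB_out hmeet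
  have hAK : Disjoint (frontier Ω) (annulus o₁ (d * exp (-r)) (d * exp r)) :=
    (disjoint_frontier_iff_isOpen.2 hΩo).mono_right fun z hz => hA z hz.1 hz.2
  have hBK : Disjoint (frontier Ω) (annulus o₂ (c * exp (-s)) (c * exp s)) :=
    (disjoint_frontier_iff_isOpen.2 hΩo).mono_right fun z hz => hB z hz.1 hz.2
  obtain ⟨z, hz₁, hz₂⟩ := hmeet
  have hzA := mem_annulus_two_of_mem_core hd.le hq hz₁
  have hzB := mem_annulus_two_of_mem_core hc.le hq hz₂
  obtain ⟨hin, hout'⟩ :=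
    inner_le_two_mul_and_outer_le_two_mul hAK hBK ho₁ ho₂ hzA hzB hA_in hA_out
  obtain ⟨hin', hout⟩ :=
    inner_le_two_mul_and_outer_le_two_mul hBK hAK ho₂ ho₁ hzB hzA hB_in hB_out
  exact comparable_of_radii_le_two_mul hd hc hin hin' hout hout'

/-- If two annuli in a domain `Ω` (centers on `∂Ω`, both boundary circles of each
meeting `∂Ω`) have intersecting `q`-cores (`q ≥ log 2`), then their sizes are
comparable: `d/2 ≤ c ≤ 2d` and `|r - s| ≤ log 4`. -/
theorem comparable_annuli_of_cores_intersect
    (Ω : Set ℂ) (hΩo : IsOpen Ω) (hΩc : IsConnected Ω)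
    (o₁ o₂ : ℂ) (d c r s q : ℝ) (hd : 0 < d) (hc : 0 < c)
    (hq : Real.log 2 ≤ q) (hr : q < r) (hs : q < s)
    (ho₁ : o₁ ∈ frontier Ω) (ho₂ : o₂ ∈ frontier Ω)
    (hA : ∀ z : ℂ, d * Real.exp (-r) < ‖z - o₁‖ →
      ‖z - o₁‖ < d * Real.exp r → z ∈ Ω)
    (hB : ∀ z : ℂ, c * Real.exp (-s) < ‖z - o₂‖ →
      ‖z - o₂‖ < c * Real.exp s → z ∈ Ω)
    (hA_in : ∃ ξ ∈ frontier Ω, ‖ξ - o₁‖ = d * Real.exp (-r))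
    (hA_out : ∃ ξ ∈ frontier Ω, ‖ξ - o₁‖ = d * Real.exp r)
    (hB_in : ∃ ξ ∈ frontier Ω, ‖ξ - o₂‖ = c * Real.exp (-s))
    (hB_out : ∃ ξ ∈ frontier Ω, ‖ξ - o₂‖ = c * Real.exp s)
    (hmeet : ∃ z : ℂ,
      (d * Real.exp (-(r - q)) < ‖z - o₁‖ ∧
        ‖z - o₁‖ < d * Real.exp (r - q)) ∧
      (c * Real.exp (-(s - q)) < ‖z - o₂‖ ∧
        ‖z - o₂‖ < c * Real.exp (s - q))) :
    d / 2 ≤ c ∧ c ≤ 2 * d ∧ |r - s| ≤ Real.log 4 :=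
  comparable_annuli_of_cores_intersect_general Ω hΩo o₁ o₂ d c r s q hd hc hq ho₁ ho₂ hA hB hA_in
    hA_out hB_in hB_out hmeet
end

section
/- Let σ > 0 and τ ≥ max(log 3, σ + (1/3)·log 3), and suppose r, s ≥ τ. Let A = {z : d·e^{-r} < |z - o₁| < d·e^r} and B = {z : c·e^{-s} < |z - o₂| < c·e^s} be annuli in a domain Ω with centers in ℂ \ Ω. Suppose there are points a, b with |a - o₁| ≤ d·e^{-(r-σ)}, |b - o₁| ≥ d·e^{r-σ}, |b - o₂| ≤ c·e^{-(s-σ)}, and |a - o₂| ≥ c·e^{s-σ}. Then the (log 2)-cores of A and B are disjoint: {z : d·e^{-(r-log 2)} < |z - o₁| < d·e^{r-log 2}} ∩ {z : c·e^{-(s-log 2)} < |z - o₂| < c·e^{s-log 2}} = ∅. -/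
/-!
The centre `o₂ ∉ Ω` is not in `A`, so it lies in the hole of `A` or beyond its outer circle;
likewise for `o₁` and `B`. If `o₂` were in the hole of `A`, the triangle inequality through `a`
and through `b` would give `c e^(s-σ) ≤ 2 d e^(σ-r)` and `d e^(r-σ) ≤ c e^(σ-s) + d e^(-r)`,
which together force `e^(2(r-σ) + 2(s-σ)) ≤ 3`, against `r - σ, s - σ ≥ (log 3) / 3`.
Hence each centre lies beyond the outer circle of the other annulus, and the `log 2`-cores,
which sit in the discs of half the outer radii, are disjoint.
-/

theorem false_of_spectacles {d c p q ε : ℝ} (hd : 0 < d) (hp : 3 ≤ p ^ 3) (hq : 3 ≤ q ^ 3)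
    (hε : ε ≤ 1 / 3) (hεp : ε * p ≤ 1)
    (ha : c * q ≤ d * p⁻¹ + d * ε) (hb : d * p ≤ c * q⁻¹ + d * ε) : False := by
  have one_le {x : ℝ} (hx : 3 ≤ x ^ 3) : 1 ≤ x := by
    by_contra! h
    nlinarith [sq_nonneg (x + 1), sq_nonneg x, mul_self_nonneg (x - 1)]
  have hp1 := one_le hp
  have hq1 := one_le hq
  have hc : c * (p * q) ≤ 2 * d := by
    have h := mul_le_mul_of_nonneg_right ha (by linarith : 0 ≤ p)
    rw [show (d * p⁻¹ + d * ε) * p = d + d * (ε * p) by field_simp] at h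
    nlinarith
  have hsq : (p * q) ^ 2 ≤ 3 := by
    have h := mul_le_mul_of_nonneg_right hb (by positivity : 0 ≤ p * q ^ 2)
    rw [show (c * q⁻¹ + d * ε) * (p * q ^ 2) = c * (p * q) + d * (ε * p * q ^ 2) by
      field_simp] at h
    have hεpq : ε * p * q ^ 2 ≤ (p * q) ^ 2 / 3 := by
      nlinarith [mul_le_mul_of_nonneg_right hε (by positivity : 0 ≤ p * q ^ 2)]
    nlinarith
  have h81 : 81 ≤ ((p * q) ^ 2) ^ 3 := by
    nlinarith [mul_le_mul hp hq (by norm_num) (by positivity)]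
  nlinarith [pow_le_pow_left₀ (by positivity) hsq 3]

theorem lt_norm_sub_of_spectacles {o₁ o₂ a b : ℂ} {d c r s σ : ℝ} (hd : 0 < d) (hσ : 0 ≤ σ)
    (hr : Real.log 3 ≤ r) (hrσ : σ + Real.log 3 / 3 ≤ r) (hsσ : σ + Real.log 3 / 3 ≤ s)
    (ha_in : ‖a - o₁‖ ≤ d * Real.exp (-(r - σ)))
    (hb_out : d * Real.exp (r - σ) ≤ ‖b - o₁‖)
    (hb_in : ‖b - o₂‖ ≤ c * Real.exp (-(s - σ)))
    (ha_out : c * Real.exp (s - σ) ≤ ‖a - o₂‖) :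
    d * Real.exp (-r) < ‖o₂ - o₁‖ := by
  by_contra! hD
  have three_le_exp_pow {x : ℝ} (hx : σ + Real.log 3 / 3 ≤ x) : 3 ≤ Real.exp (x - σ) ^ 3 := by
    rw [← Real.exp_nat_mul, ← Real.exp_log (by norm_num : (0 : ℝ) < 3)]
    exact Real.exp_le_exp.2 (by push_cast; linarith)
  refine false_of_spectacles hd (three_le_exp_pow hrσ) (three_le_exp_pow hsσ)
    (c := c) (ε := Real.exp (-r)) ?_ ?_ ?_ ?_
  · calc Real.exp (-r) ≤ Real.exp (-Real.log 3) := Real.exp_le_exp.2 (by linarith)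
      _ = 1 / 3 := by rw [Real.exp_neg, Real.exp_log (by norm_num), one_div]
  · rw [← Real.exp_add, Real.exp_le_one_iff]
    linarith
  · calc c * Real.exp (s - σ) ≤ ‖a - o₂‖ := ha_out
      _ ≤ ‖a - o₁‖ + ‖o₂ - o₁‖ := by
        rw [norm_sub_rev o₂]; exact norm_sub_le_norm_sub_add_norm_sub a o₁ o₂
      _ ≤ d * (Real.exp (r - σ))⁻¹ + d * Real.exp (-r) := by
        rw [← Real.exp_neg]; linarith
  · calc d * Real.exp (r - σ) ≤ ‖b - o₁‖ := hb_out
      _ ≤ ‖b - o₂‖ + ‖o₂ - o₁‖ := norm_sub_le_norm_sub_add_norm_sub b o₂ o₁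
      _ ≤ c * (Real.exp (s - σ))⁻¹ + d * Real.exp (-r) := by
        rw [← Real.exp_neg]; linarith

theorem cores_disjoint_spectacles_general
    (Ω : Set ℂ)
    (o₁ o₂ : ℂ) (d c r s σ τ : ℝ) (hd : 0 < d) (hc : 0 < c)
    (hσ : 0 < σ) (hτ1 : Real.log 3 ≤ τ) (hτ2 : σ + Real.log 3 / 3 ≤ τ)
    (hr : τ ≤ r) (hs : τ ≤ s)
    (ho₁ : o₁ ∉ Ω) (ho₂ : o₂ ∉ Ω)
    (hA : ∀ z : ℂ, d * Real.exp (-r) < ‖z - o₁‖ →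
      ‖z - o₁‖ < d * Real.exp r → z ∈ Ω)
    (hB : ∀ z : ℂ, c * Real.exp (-s) < ‖z - o₂‖ →
      ‖z - o₂‖ < c * Real.exp s → z ∈ Ω)
    (a b : ℂ)
    (ha_in : ‖a - o₁‖ ≤ d * Real.exp (-(r - σ)))
    (hb_out : d * Real.exp (r - σ) ≤ ‖b - o₁‖)
    (hb_in : ‖b - o₂‖ ≤ c * Real.exp (-(s - σ)))
    (ha_out : c * Real.exp (s - σ) ≤ ‖a - o₂‖) :
    {z : ℂ | d * Real.exp (-(r - Real.log 2)) < ‖z - o₁‖ ∧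
        ‖z - o₁‖ < d * Real.exp (r - Real.log 2)} ∩
      {z : ℂ | c * Real.exp (-(s - Real.log 2)) < ‖z - o₂‖ ∧
        ‖z - o₂‖ < c * Real.exp (s - Real.log 2)} = ∅ := by
  have h₁ : d * Real.exp r ≤ ‖o₂ - o₁‖ := not_lt.1 fun h ↦ ho₂ <| hA o₂
    (lt_norm_sub_of_spectacles hd hσ.le (by linarith) (by linarith) (by linarith)
      ha_in hb_out hb_in ha_out) h
  have h₂ : c * Real.exp s ≤ ‖o₁ - o₂‖ := not_lt.1 fun h ↦ ho₁ <| hB o₁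
    (lt_norm_sub_of_spectacles hc hσ.le (by linarith) (by linarith) (by linarith)
      hb_in ha_out ha_in hb_out) h
  have hsep : d * Real.exp (r - Real.log 2) + c * Real.exp (s - Real.log 2) ≤ dist o₁ o₂ := by
    rw [Real.exp_sub, Real.exp_sub, Real.exp_log two_pos, dist_eq_norm]
    linarith [norm_sub_rev o₁ o₂]
  exact Set.disjoint_iff_inter_eq_empty.1 <| (Metric.ball_disjoint_ball hsep).mono
    (fun z hz ↦ mem_ball_iff_norm.2 hz.2) fun z hz ↦ mem_ball_iff_norm.2 hz.2

/-- "Spectacles configuration" forces disjoint cores: if `a` is inside the `σ`-core of `A`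
and outside the `σ`-core of `B`, while `b` is outside the `σ`-core of `A` and inside the
`σ`-core of `B`, then the `(log 2)`-cores of `A` and `B` are disjoint. -/
theorem cores_disjoint_spectacles
    (Ω : Set ℂ) (hΩo : IsOpen Ω) (hΩc : IsConnected Ω)
    (o₁ o₂ : ℂ) (d c r s σ τ : ℝ) (hd : 0 < d) (hc : 0 < c)
    (hσ : 0 < σ) (hτ1 : Real.log 3 ≤ τ) (hτ2 : σ + Real.log 3 / 3 ≤ τ)
    (hr : τ ≤ r) (hs : τ ≤ s)
    (ho₁ : o₁ ∉ Ω) (ho₂ : o₂ ∉ Ω)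
    (hA : ∀ z : ℂ, d * Real.exp (-r) < ‖z - o₁‖ →
      ‖z - o₁‖ < d * Real.exp r → z ∈ Ω)
    (hB : ∀ z : ℂ, c * Real.exp (-s) < ‖z - o₂‖ →
      ‖z - o₂‖ < c * Real.exp s → z ∈ Ω)
    (a b : ℂ)
    (ha_in : ‖a - o₁‖ ≤ d * Real.exp (-(r - σ)))
    (hb_out : d * Real.exp (r - σ) ≤ ‖b - o₁‖)
    (hb_in : ‖b - o₂‖ ≤ c * Real.exp (-(s - σ)))
    (ha_out : c * Real.exp (s - σ) ≤ ‖a - o₂‖) :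
    {z : ℂ | d * Real.exp (-(r - Real.log 2)) < ‖z - o₁‖ ∧
        ‖z - o₁‖ < d * Real.exp (r - Real.log 2)} ∩
      {z : ℂ | c * Real.exp (-(s - Real.log 2)) < ‖z - o₂‖ ∧
        ‖z - o₂‖ < c * Real.exp (s - Real.log 2)} = ∅ :=
  cores_disjoint_spectacles_general Ω o₁ o₂ d c r s σ τ hd hc hσ hτ1 hτ2 hr hs ho₁ ho₂ hA hB a b
    ha_in hb_out hb_in ha_out
end

section
/- Let Ω ⊊ ℂ be a domain and γ a rectifiable path in Ω. Then ∫_γ ds/dist(z, ∂Ω) ≥ log(1 + ℓ(γ)/min_{z∈|γ|} dist(z, ∂Ω)), where ℓ(γ) is the Euclidean length of γ. -/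
open Set

/-- `γ : ℝ → ℂ` is a (differentiable) path in `Ω` from `a` to `b`, parametrized on `[0,1]`. -/
def IsPathIn (Ω : Set ℂ) (a b : ℂ) (γ : ℝ → ℂ) : Prop :=
  Differentiable ℝ γ ∧ (∀ t ∈ Icc (0 : ℝ) 1, γ t ∈ Ω) ∧ γ 0 = a ∧ γ 1 = b

/-- The quasihyperbolic length of a path `γ` (parametrized on `[0,1]`) in `Ω ⊊ ℂ`:
`∫_γ ds / dist(z, ∂Ω)`. -/
noncomputable def qhLength (Ω : Set ℂ) (γ : ℝ → ℂ) : ℝ :=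
  ∫ t in (0 : ℝ)..1, ‖deriv γ t‖ / Metric.infDist (γ t) (frontier Ω)

/-- The quasihyperbolic distance in `Ω ⊊ ℂ`: the infimum of quasihyperbolic lengths
of paths in `Ω` joining `a` to `b`. -/
noncomputable def qhDist (Ω : Set ℂ) (a b : ℂ) : ℝ :=
  sInf {L : ℝ | ∃ γ : ℝ → ℂ, IsPathIn Ω a b γ ∧ L = qhLength Ω γ}

/-!
Let `d(t)` be the distance from `γ t` to `∂Ω`, minimal at `t = c` with value `m`. Since `d` is
`1`-Lipschitz, `d t ≤ F t := m + |∫_c^t |γ'||`, and `F` is absolutely continuous with `|F'| ≤ |γ'|`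
a.e. On each of `[0, c]` and `[c, 1]` the fundamental theorem of calculus for `log ∘ F` gives
`∫ |γ'| / d ≥ ∫ |F'| / F ≥ log (1 + ℓᵢ / m)`, where `ℓᵢ` is the length of that piece, and
`(1 + ℓ₁ / m) (1 + ℓ₂ / m) ≥ 1 + ℓ / m`.
-/

open MeasureTheory Filter Real Metric

theorem LipschitzOnWith.comp_absolutelyContinuousOnInterval {X Y : Type*} [PseudoMetricSpace X]
    [PseudoMetricSpace Y] {g : X → Y} {K : NNReal} {s : Set X} {F : ℝ → X} {a b : ℝ}
    (hg : LipschitzOnWith K g s)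
    (hF : AbsolutelyContinuousOnInterval F a b) (hFs : MapsTo F (uIcc a b) s) :
    AbsolutelyContinuousOnInterval (g ∘ F) a b := by
  refine squeeze_zero' (Eventually.of_forall fun _ ↦ Finset.sum_nonneg fun _ _ ↦ dist_nonneg) ?_
    (by simpa using Tendsto.const_mul (K : ℝ) hF)
  filter_upwards [mem_inf_of_right (mem_principal_self _)] with E hE
  rw [Finset.mul_sum]
  exact Finset.sum_le_sum fun i hi ↦
    hg.dist_le_mul _ (hFs (hE.1 i hi).1) _ (hFs (hE.1 i hi).2)

theorem lipschitzOnWith_log_Ici {δ : ℝ} (hδ : 0 < δ) :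
    LipschitzOnWith (Real.toNNReal δ⁻¹) log (Ici δ) := by
  refine (convex_Ici δ).lipschitzOnWith_of_nnnorm_deriv_le
    (fun x hx ↦ differentiableAt_log (hδ.trans_le hx).ne') (fun x hx ↦ ?_)
  rw [deriv_log, ← NNReal.coe_le_coe, coe_nnnorm, Real.coe_toNNReal _ (inv_nonneg.2 hδ.le),
    norm_inv, Real.norm_of_nonneg (hδ.le.trans hx)]
  exact inv_anti₀ hδ hx

theorem AbsolutelyContinuousOnInterval.integral_deriv_div_eq_log_sub {F : ℝ → ℝ} {a b : ℝ}
    (hF : AbsolutelyContinuousOnInterval F a b) (hpos : ∀ x ∈ uIcc a b, 0 < F x) :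
    ∫ x in a..b, deriv F x / F x = log (F b) - log (F a) := by
  obtain ⟨x₀, hx₀, hmin⟩ := isCompact_uIcc.exists_isMinOn nonempty_uIcc hF.continuousOn
  have hlog : AbsolutelyContinuousOnInterval (log ∘ F) a b :=
    (lipschitzOnWith_log_Ici (hpos x₀ hx₀)).comp_absolutelyContinuousOnInterval hF
      fun x hx ↦ hmin hx
  refine (intervalIntegral.integral_congr_ae ?_).trans hlog.integral_deriv_eq_sub
  filter_upwards [hF.ae_differentiableAt] with x hdiff hx
  have hxI := uIoc_subset_uIcc hx
  exact (((hdiff hxI).hasDerivAt.log (hpos x hxI).ne').deriv).symm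

theorem IntervalIntegrable.div_continuousOn {f d : ℝ → ℝ} {a b : ℝ}
    (hf : IntervalIntegrable f volume a b) (hd : ContinuousOn d (uIcc a b))
    (hd0 : ∀ t ∈ uIcc a b, d t ≠ 0) :
    IntervalIntegrable (fun t ↦ f t / d t) volume a b := by
  simpa only [div_eq_mul_inv, Pi.inv_apply] using hf.mul_continuousOn (hd.inv₀ hd0)

theorem AbsolutelyContinuousOnInterval.abs_log_sub_le_integral_div {F f d : ℝ → ℝ} {a b : ℝ}
    (hab : a ≤ b) (hF : AbsolutelyContinuousOnInterval F a b)
    (hf : IntervalIntegrable f volume a b) (hFf : ∀ᵐ t, t ∈ Icc a b → |deriv F t| ≤ f t)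
    (hd : ContinuousOn d (Icc a b)) (hd0 : ∀ t ∈ Icc a b, 0 < d t)
    (hdF : ∀ t ∈ Icc a b, d t ≤ F t) :
    |log (F b) - log (F a)| ≤ ∫ t in a..b, f t / d t := by
  rw [← uIcc_of_le hab] at hd hd0 hdF
  have hFpos : ∀ t ∈ uIcc a b, 0 < F t := fun t ht ↦ (hd0 t ht).trans_le (hdF t ht)
  have hFd : IntervalIntegrable (fun t ↦ |deriv F t / F t|) volume a b :=
    (hF.intervalIntegrable_deriv.div_continuousOn hF.continuousOn fun t ht ↦ (hFpos t ht).ne').abs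
  have hfd := hf.div_continuousOn hd fun t ht ↦ (hd0 t ht).ne'
  rw [← hF.integral_deriv_div_eq_log_sub hFpos]
  refine (intervalIntegral.abs_integral_le_integral_abs hab).trans
    (intervalIntegral.integral_mono_ae_restrict hab hFd hfd ?_)
  rw [EventuallyLE, ae_restrict_iff' measurableSet_Icc]
  filter_upwards [hFf] with t hFft ht
  have hFft := hFft ht
  rw [← uIcc_of_le hab] at ht
  rw [abs_div, abs_of_pos (hFpos t ht)]
  exact div_le_div₀ ((abs_nonneg _).trans hFft) hFft (hd0 t ht) (hdF t ht)

theorem norm_sub_le_abs_integral_norm_deriv {E : Type*} [NormedAddCommGroup E]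
    [NormedSpace ℝ E] [CompleteSpace E] {γ : ℝ → E} {a b : ℝ}
    (hγ : ∀ t ∈ uIcc a b, DifferentiableAt ℝ γ t)
    (hint : IntervalIntegrable (deriv γ) volume a b) :
    ‖γ b - γ a‖ ≤ |∫ t in a..b, ‖deriv γ t‖| := by
  rw [← intervalIntegral.integral_deriv_eq_sub hγ hint]
  exact intervalIntegral.norm_integral_le_abs_integral_norm

theorem abs_deriv_abs_le_of_hasDerivAt {G : ℝ → ℝ} {g t : ℝ} (hG : HasDerivAt G g t) :
    |deriv (fun s ↦ |G s|) t| ≤ |g| := by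
  rcases lt_trichotomy (G t) 0 with hneg | hzero | hpos
  · have h := (hasDerivAt_abs_neg hneg).comp t hG
    rw [Function.comp_def] at h
    simp [h.deriv]
  · have hmin : IsLocalMin (fun s ↦ |G s|) t := Eventually.of_forall fun s ↦ by simp [hzero]
    simp [hmin.deriv_eq_zero]
  · have h := (hasDerivAt_abs_pos hpos).comp t hG
    rw [Function.comp_def] at h
    simp [h.deriv]

theorem IntervalIntegrable.absolutelyContinuousOnInterval_abs_integral {f : ℝ → ℝ} {a b c : ℝ}
    (hf : IntervalIntegrable f volume a b) (hc : c ∈ uIcc a b) :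
    AbsolutelyContinuousOnInterval (fun t ↦ |∫ x in c..t, f x|) a b :=
  (lipschitzWith_one_norm (E := ℝ)).lipschitzOnWith.comp_absolutelyContinuousOnInterval
    (hf.absolutelyContinuousOnInterval_intervalIntegral hc) (mapsTo_univ _ _)

theorem IntervalIntegrable.ae_abs_deriv_abs_integral_le {f : ℝ → ℝ} {a b c : ℝ}
    (hf : IntervalIntegrable f volume a b) (hc : c ∈ uIcc a b) :
    ∀ᵐ t, t ∈ uIcc a b → |deriv (fun t ↦ |∫ x in c..t, f x|) t| ≤ |f t| := by
  filter_upwards [hf.ae_hasDerivAt_integral] with t ht htab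
  exact abs_deriv_abs_le_of_hasDerivAt (ht htab c hc)

theorem log_one_add_add_le {x y : ℝ} (hx : 0 ≤ x) (hy : 0 ≤ y) :
    log (1 + (x + y)) ≤ log (1 + x) + log (1 + y) := by
  rw [← log_mul (by positivity) (by positivity)]
  exact log_le_log (by positivity) (by nlinarith [mul_nonneg hx hy])

theorem log_one_add_integral_div_le_integral_div {f d : ℝ → ℝ} {a b c m : ℝ}
    (hf : IntervalIntegrable f volume a b) (hf0 : ∀ t ∈ Icc a b, 0 ≤ f t)
    (hd : ContinuousOn d (Icc a b)) (hm : 0 < m) (hdm : ∀ t ∈ Icc a b, m ≤ d t)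
    (hc : c ∈ Icc a b) (hdc : ∀ t ∈ Icc a b, d t ≤ m + |∫ x in c..t, f x|) :
    log (1 + (∫ x in a..b, f x) / m) ≤ ∫ t in a..b, f t / d t := by
  have hab : a ≤ b := hc.1.trans hc.2
  have hac : uIcc a c ⊆ uIcc a b := uIcc_subset_uIcc left_mem_uIcc (Icc_subset_uIcc hc)
  have hcb : uIcc c b ⊆ uIcc a b := uIcc_subset_uIcc (Icc_subset_uIcc hc) right_mem_uIcc
  set F : ℝ → ℝ := fun t ↦ m + |∫ x in c..t, f x|
  have hF : AbsolutelyContinuousOnInterval F a b :=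
    (LipschitzWith.const m).lipschitzOnWith.absolutelyContinuousOnInterval.fun_add
      (hf.absolutelyContinuousOnInterval_abs_integral (Icc_subset_uIcc hc))
  have hFf : ∀ᵐ t, t ∈ Icc a b → |deriv F t| ≤ f t := by
    filter_upwards [hf.ae_abs_deriv_abs_integral_le (Icc_subset_uIcc hc)] with t ht htab
    rw [deriv_const_add, ← abs_of_nonneg (hf0 t htab)]
    exact ht (Icc_subset_uIcc htab)
  have hpiece : ∀ {u v}, u ≤ v → uIcc u v ⊆ uIcc a b →
      |log (F v) - log (F u)| ≤ ∫ t in u..v, f t / d t := fun {u v} huv huvab ↦ by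
    have hIcc : Icc u v ⊆ Icc a b := by rwa [uIcc_of_le huv, uIcc_of_le hab] at huvab
    exact (hF.mono huvab).abs_log_sub_le_integral_div huv (hf.mono_set huvab)
      (by filter_upwards [hFf] with t ht htuv using ht (hIcc htuv)) (hd.mono hIcc)
      (fun t ht ↦ hm.trans_le (hdm t (hIcc ht))) (fun t ht ↦ hdc t (hIcc ht))
  have hFc : F c = m := by simp [F]
  have hlog : ∀ t, log (1 + |∫ x in c..t, f x| / m) = log (F t) - log (F c) := fun t ↦ by
    rw [hFc, ← log_div (by positivity) hm.ne', add_div, div_self hm.ne']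
  have hL₁ : 0 ≤ ∫ x in a..c, f x :=
    intervalIntegral.integral_nonneg hc.1 fun t ht ↦ hf0 t ⟨ht.1, ht.2.trans hc.2⟩
  have hL₂ : 0 ≤ ∫ x in c..b, f x :=
    intervalIntegral.integral_nonneg hc.2 fun t ht ↦ hf0 t ⟨hc.1.trans ht.1, ht.2⟩
  have hfd := hf.div_continuousOn (uIcc_of_le hab ▸ hd)
    fun t ht ↦ (hm.trans_le (hdm t (uIcc_of_le hab ▸ ht))).ne'
  rw [← intervalIntegral.integral_add_adjacent_intervals (hf.mono_set hac) (hf.mono_set hcb),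
    ← intervalIntegral.integral_add_adjacent_intervals (hfd.mono_set hac) (hfd.mono_set hcb),
    add_div]
  calc log (1 + ((∫ x in a..c, f x) / m + (∫ x in c..b, f x) / m))
      ≤ log (1 + (∫ x in a..c, f x) / m) + log (1 + (∫ x in c..b, f x) / m) :=
        log_one_add_add_le (by positivity) (by positivity)
    _ ≤ |log (F a) - log (F c)| + |log (F b) - log (F c)| := by
        rw [← hlog, ← hlog, intervalIntegral.integral_symm (f := f) a c, abs_neg,
          abs_of_nonneg hL₁, abs_of_nonneg hL₂]
        exact add_le_add (le_abs_self _) (le_abs_self _)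
    _ ≤ _ := by
        rw [abs_sub_comm (log (F a))]
        exact add_le_add (hpiece hc.1 hac) (hpiece hc.2 hcb)

theorem qh_length_lower_bound_general
    (Ω : Set ℂ)
    (γ : ℝ → ℂ) (hγ : Differentiable ℝ γ) :
    Real.log (1 + (∫ t in (0 : ℝ)..1, ‖deriv γ t‖) /
        sInf ((fun t => Metric.infDist (γ t) (frontier Ω)) '' Icc (0 : ℝ) 1)) ≤
      qhLength Ω γ := by
  set d : ℝ → ℝ := fun t ↦ infDist (γ t) (frontier Ω)
  have hd : Continuous d := (continuous_infDist_pt _).comp hγ.continuous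
  obtain ⟨c, hc, hmin⟩ :=
    isCompact_Icc.exists_isMinOn (nonempty_Icc.2 zero_le_one) hd.continuousOn
  rw [(show IsLeast (d '' Icc 0 1) (d c) from
    ⟨mem_image_of_mem d hc, forall_mem_image.2 fun t ht ↦ hmin ht⟩).csInf_eq]
  have hqh : 0 ≤ qhLength Ω γ :=
    intervalIntegral.integral_nonneg zero_le_one fun t _ ↦
      div_nonneg (norm_nonneg _) infDist_nonneg
  have hm₀ : 0 ≤ d c := infDist_nonneg
  -- both degenerate cases make the left-hand side `log 1`: `x / 0 = 0`, and the integral of a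
  -- non-integrable function is `0`
  rcases hm₀.eq_or_lt with hm | hm
  · rwa [← hm, div_zero, add_zero, log_one]
  by_cases hint : IntervalIntegrable (fun t ↦ ‖deriv γ t‖) volume 0 1
  swap
  · rwa [intervalIntegral.integral_undef hint, zero_div, add_zero, log_one]
  have hderiv := (IntervalIntegrable.intervalIntegrable_norm_iff
    (measurable_deriv γ).aestronglyMeasurable).1 hint
  refine log_one_add_integral_div_le_integral_div hint (fun _ _ ↦ norm_nonneg _) hd.continuousOn
    hm (fun t ht ↦ hmin ht) hc fun t ht ↦
      (infDist_le_infDist_add_dist (y := γ c)).trans (add_le_add le_rfl ?_)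
  rw [dist_eq_norm]
  exact norm_sub_le_abs_integral_norm_deriv (fun s _ ↦ hγ s)
    (hderiv.mono_set (uIcc_subset_uIcc (Icc_subset_uIcc hc) (Icc_subset_uIcc ht)))

/-- For any (differentiable) path `γ` in a domain `Ω ⊊ ℂ`, the quasihyperbolic length
satisfies `∫_γ ds/dist(z,∂Ω) ≥ log(1 + ℓ(γ)/min_{z ∈ |γ|} dist(z,∂Ω))`. -/
theorem qh_length_lower_bound
    (Ω : Set ℂ) (hΩo : IsOpen Ω) (hΩc : IsConnected Ω)
    (hne : Ω.Nonempty) (hprop : Ω ≠ Set.univ)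
    (γ : ℝ → ℂ) (hγ : Differentiable ℝ γ)
    (hmem : ∀ t ∈ Icc (0 : ℝ) 1, γ t ∈ Ω) :
    Real.log (1 + (∫ t in (0 : ℝ)..1, ‖deriv γ t‖) /
        sInf ((fun t => Metric.infDist (γ t) (frontier Ω)) '' Icc (0 : ℝ) 1)) ≤
      qhLength Ω γ :=
  qh_length_lower_bound_general Ω γ hγ
end
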